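/- Let M be a connected unweighted graph with n vertices, with its shortest-path metric, and let p ∈ ℕ satisfy p ≤ diam(M)+1. Then F(M) contains a subspace of dimension d ≥ n(p−1)/p that is 4p-complemented and 4p-isomorphic to ℓ₁^d. Moreover, if p > diam(M), then the Banach–Mazur distance between F(M) and ℓ₁^{n−1} is at most 2p. -/
import Mathlib


open Finset
set_option linter.unusedSectionVars false

/-- The Lipschitz-free (Kantorovich–Rubinstein) norm of a molecule on a finite
metric space, expressed via duality with `1`-Lipschitz functions. -/
noncomputable def freeNorm (M : Type*) [MetricSpace M] [Fintype M] (m : M → ℝ) : ℝ :=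
  sSup {r : ℝ | ∃ f : M → ℝ, LipschitzWith 1 f ∧ r = ∑ p, m p * f p}

/-- Molecules: the underlying vector space of the Lipschitz free space on a finite space;
equipped with `freeNorm` it is the Lipschitz free space `F(M)`. -/
def molecules (M : Type*) [Fintype M] : Submodule ℝ (M → ℝ) where
  carrier := {m | ∑ p, m p = 0}
  add_mem' := by
    intro a b ha hb
    simp only [Set.mem_setOf_eq, Pi.add_apply, Finset.sum_add_distrib] at *
    rw [ha, hb]; ring
  zero_mem' := by simp
  smul_mem' := by
    intro c a ha
    simp only [Set.mem_setOf_eq, Pi.smul_apply, smul_eq_mul, ← Finset.mul_sum] at *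
    rw [ha]; ring

/-- The norm of `ℓ₁^k`. -/
def l1norm {k : ℕ} (x : Fin k → ℝ) : ℝ := ∑ i, |x i|

section Aux
variable {V : Type*} [Fintype V] [MetricSpace V]

lemma lip_zero : LipschitzWith 1 (fun _ : V => (0:ℝ)) :=
  LipschitzWith.of_dist_le_mul (by intro x y; simp [dist_nonneg])

lemma freeSet_nonempty (m : V → ℝ) :
    {r : ℝ | ∃ f : V → ℝ, LipschitzWith 1 f ∧ r = ∑ p, m p * f p}.Nonempty :=
  ⟨0, fun _ => 0, lip_zero, by simp⟩

lemma freeSet_bdd [Nonempty V] (m : V → ℝ) (hm : ∑ p, m p = 0) :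
    BddAbove {r : ℝ | ∃ f : V → ℝ, LipschitzWith 1 f ∧ r = ∑ p, m p * f p} := by
  obtain ⟨O⟩ := ‹Nonempty V›
  refine ⟨∑ q, |m q| * dist q O, ?_⟩
  rintro r ⟨f, hf, rfl⟩
  have h1 : ∑ q, m q * f q = ∑ q, m q * (f q - f O) := by
    simp only [mul_sub, Finset.sum_sub_distrib, ← Finset.sum_mul, hm, zero_mul, sub_zero]
  rw [h1]
  refine Finset.sum_le_sum fun q _ => ?_
  calc m q * (f q - f O) ≤ |m q * (f q - f O)| := le_abs_self _
    _ = |m q| * |f q - f O| := abs_mul _ _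
    _ ≤ |m q| * dist q O := by
        refine mul_le_mul_of_nonneg_left ?_ (abs_nonneg _)
        have := hf.dist_le_mul q O
        rw [Real.dist_eq] at this
        simpa using this

lemma le_freeNorm [Nonempty V] (m : V → ℝ) (hm : ∑ p, m p = 0) (f : V → ℝ)
    (hf : LipschitzWith 1 f) : ∑ p, m p * f p ≤ freeNorm V m :=
  le_csSup (freeSet_bdd m hm) ⟨f, hf, rfl⟩

lemma freeNorm_nonneg [Nonempty V] (m : V → ℝ) (hm : ∑ p, m p = 0) : 0 ≤ freeNorm V m := by
  have := le_freeNorm m hm (fun _ => 0) lip_zero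
  simpa using this

lemma freeNorm_le (m : V → ℝ) (C : ℝ)
    (h : ∀ f : V → ℝ, LipschitzWith 1 f → ∑ p, m p * f p ≤ C) : freeNorm V m ≤ C := by
  refine csSup_le (freeSet_nonempty m) ?_
  rintro r ⟨f, hf, rfl⟩
  exact h f hf

lemma lip_of_small (hone : ∀ x y : V, x ≠ y → (1:ℝ) ≤ dist x y) (f : V → ℝ)
    (hb : ∀ x, |f x| ≤ 2⁻¹) : LipschitzWith 1 f := by
  refine LipschitzWith.of_dist_le_mul fun x y => ?_
  by_cases hxy : x = y
  · simp [hxy, dist_nonneg]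
  · rw [NNReal.coe_one, one_mul, Real.dist_eq]
    calc |f x - f y| ≤ |f x| + |f y| := abs_sub _ _
      _ ≤ 2⁻¹ + 2⁻¹ := add_le_add (hb x) (hb y)
      _ = 1 := by norm_num
      _ ≤ dist x y := hone x y hxy

lemma half_le_freeNorm [Nonempty V] (hone : ∀ x y : V, x ≠ y → (1:ℝ) ≤ dist x y)
    [DecidableEq V] (m : V → ℝ) (hm : ∑ p, m p = 0) (S : Finset V) :
    2⁻¹ * ∑ x ∈ S, |m x| ≤ freeNorm V m := by
  classical
  set f : V → ℝ := fun q => if q ∈ S then 2⁻¹ * Real.sign (m q) else 0 with hfdef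
  have hsign : ∀ a : ℝ, |Real.sign a| ≤ 1 := by
    intro a
    rcases lt_trichotomy a 0 with h|h|h
    · rw [Real.sign_of_neg h]; norm_num
    · simp [h]
    · rw [Real.sign_of_pos h]; norm_num
  have hself : ∀ a : ℝ, a * Real.sign a = |a| := by
    intro a
    rcases lt_trichotomy a 0 with h|h|h
    · rw [Real.sign_of_neg h, abs_of_neg h]; ring
    · simp [h]
    · rw [Real.sign_of_pos h, abs_of_pos h]; ring
  have hf : LipschitzWith 1 f := by
    refine lip_of_small hone f fun x => ?_
    by_cases hx : x ∈ S
    · simp only [hfdef, if_pos hx, abs_mul]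
      calc |(2:ℝ)⁻¹| * |Real.sign (m x)| ≤ |(2:ℝ)⁻¹| * 1 :=
            mul_le_mul_of_nonneg_left (hsign _) (abs_nonneg _)
        _ = 2⁻¹ := by norm_num
    · simp [hfdef, hx]
  have hcomp : ∑ q, m q * f q = 2⁻¹ * ∑ x ∈ S, |m x| := by
    rw [← Finset.sum_subset (Finset.subset_univ S)
      (by intro x _ hx; simp [hfdef, hx])]
    rw [Finset.mul_sum]
    refine Finset.sum_congr rfl fun x hx => ?_
    rw [hfdef]
    simp only [if_pos hx]
    rw [← hself (m x)]; ring
  rw [← hcomp]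
  exact le_freeNorm m hm f hf

end Aux

section Mol
variable {V : Type*} [Fintype V] [MetricSpace V] [DecidableEq V]

def mol (x y : V) : V → ℝ := fun q => (if q = x then 1 else 0) - (if q = y then 1 else 0)

lemma sum_mol (x y : V) : ∑ q, mol x y q = 0 := by
  simp [mol, Finset.sum_sub_distrib]

lemma sum_mol_mul (x y : V) (f : V → ℝ) : ∑ q, mol x y q * f q = f x - f y := by
  simp [mol, sub_mul, Finset.sum_sub_distrib, ite_mul]

lemma freeNorm_comb_le (I : Finset V) (c : V → ℝ) (σ : V → V) :
    freeNorm V (fun q => ∑ x ∈ I, c x * mol x (σ x) q) ≤ ∑ x ∈ I, |c x| * dist x (σ x) := by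
  refine freeNorm_le _ _ fun f hf => ?_
  have h1 : ∑ q, (∑ x ∈ I, c x * mol x (σ x) q) * f q
      = ∑ x ∈ I, c x * (f x - f (σ x)) := by
    simp only [Finset.sum_mul]
    rw [Finset.sum_comm]
    refine Finset.sum_congr rfl fun x _ => ?_
    simp only [mul_assoc, ← Finset.mul_sum, sum_mol_mul]
  rw [h1]
  refine Finset.sum_le_sum fun x _ => ?_
  calc c x * (f x - f (σ x)) ≤ |c x * (f x - f (σ x))| := le_abs_self _
    _ = |c x| * |f x - f (σ x)| := abs_mul _ _
    _ ≤ |c x| * dist x (σ x) := by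
        refine mul_le_mul_of_nonneg_left ?_ (abs_nonneg _)
        have := hf.dist_le_mul x (σ x)
        rw [Real.dist_eq] at this
        simpa using this

end Mol

lemma l1norm_nonneg {k : ℕ} (x : Fin k → ℝ) : 0 ≤ l1norm x :=
  Finset.sum_nonneg fun i _ => abs_nonneg _

section Construct
variable {V : Type*} [Fintype V] [MetricSpace V] [DecidableEq V]

lemma construct [Nonempty V]
    (hone : ∀ x y : V, x ≠ y → (1:ℝ) ≤ dist x y)
    (A : Finset V) (π : V → V) (hπA : ∀ x, x ∉ A → π x ∈ A)
    (D C : ℝ) (hD : 0 ≤ D) (hC : 2 * D ≤ C)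
    (hπd : ∀ x, x ∉ A → dist x (π x) ≤ D)
    (d : ℕ) (hd : (Aᶜ : Finset V).card = d) :
    ∃ Y : Submodule ℝ (V → ℝ), Y ≤ molecules V ∧ Module.finrank ℝ Y = d ∧
      (∃ T : Y ≃ₗ[ℝ] (Fin d → ℝ),
        ∀ u : Y, l1norm (T u) ≤ freeNorm V u ∧ freeNorm V u ≤ C * l1norm (T u)) ∧
      (∃ P : (V → ℝ) →ₗ[ℝ] (V → ℝ),
        (∀ m, P m ∈ Y) ∧ (∀ u ∈ Y, P u = u) ∧
        ∀ m ∈ molecules V, freeNorm V (P m) ≤ C * freeNorm V m) ∧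
      (∀ a0 : V, A = {a0} → molecules V ≤ Y) := by
  classical
  set I : Finset V := Aᶜ with hI
  have hmemI : ∀ x : V, x ∈ I ↔ x ∉ A := fun x => Finset.mem_compl
  -- the projection
  set P : (V → ℝ) →ₗ[ℝ] (V → ℝ) :=
    { toFun := fun m q => ∑ x ∈ I, m x * mol x (π x) q
      map_add' := by
        intro a b; funext q
        simp [add_mul, Finset.sum_add_distrib]
      map_smul' := by
        intro c a; funext q
        simp [Finset.mul_sum, mul_assoc] } with hP
  have hPapply : ∀ (m : V → ℝ) (q : V), P m q = ∑ x ∈ I, m x * mol x (π x) q := fun _ _ => rfl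
  -- value on I
  have f1 : ∀ (m : V → ℝ) (q : V), q ∈ I → P m q = m q := by
    intro m q hq
    rw [hPapply]
    have h1 : ∀ x ∈ I, m x * mol x (π x) q = (if x = q then m q else 0) := by
      intro x hx
      have hqπ : q ≠ π x := by
        intro h
        exact ((hmemI q).1 hq) (h ▸ hπA x ((hmemI x).1 hx))
      by_cases hxq : x = q
      · subst hxq; simp [mol, hqπ]
      · simp [mol, hqπ, Ne.symm hxq, hxq]
    rw [Finset.sum_congr rfl h1, Finset.sum_ite_eq' I q (fun _ => m q), if_pos hq]
  -- P depends only on values on I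
  have f2 : ∀ m₁ m₂ : V → ℝ, (∀ x ∈ I, m₁ x = m₂ x) → P m₁ = P m₂ := by
    intro m₁ m₂ h; funext q
    rw [hPapply, hPapply]
    exact Finset.sum_congr rfl fun x hx => by rw [h x hx]
  -- range in molecules
  have f3 : ∀ m : V → ℝ, P m ∈ molecules V := by
    intro m
    show ∑ q, P m q = 0
    simp only [hPapply]
    rw [Finset.sum_comm]
    refine Finset.sum_eq_zero fun x _ => ?_
    rw [← Finset.mul_sum, sum_mol, mul_zero]
  -- idempotent
  have f4 : ∀ m : V → ℝ, P (P m) = P m := by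
    intro m
    exact f2 _ _ fun x hx => f1 m x hx
  set Y : Submodule ℝ (V → ℝ) := LinearMap.range P with hY
  have hYmol : Y ≤ molecules V := by
    rintro u ⟨m, rfl⟩; exact f3 m
  have hPfix : ∀ u ∈ Y, P u = u := by
    rintro u ⟨m, rfl⟩; exact f4 m
  -- equivalence with Fin d → ℝ
  have hcard : Fintype.card ↥I = d := by rw [Fintype.card_coe, hI, hd]
  set emb : Fin d ≃ ↥I := (Fintype.equivFinOfCardEq hcard).symm with hemb
  set ρ : Y →ₗ[ℝ] (Fin d → ℝ) :=
    { toFun := fun u => fun i => 2⁻¹ * (u : V → ℝ) (emb i)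
      map_add' := by intro u v; funext i; simp [mul_add]
      map_smul' := by intro c u; funext i; simp; ring } with hρ
  have hρval : ∀ (u : Y) (i : Fin d), ρ u i = 2⁻¹ * (u : V → ℝ) (emb i) := fun _ _ => rfl
  have hval0 : ∀ u : Y, (∀ x ∈ I, (u : V → ℝ) x = 0) → u = 0 := by
    intro u hu
    have h0 : P (u : V → ℝ) = 0 := by
      rw [f2 (u : V → ℝ) 0 (fun x hx => by simpa using hu x hx)]
      simp
    have := hPfix _ u.2
    ext q
    rw [← this, h0]
    rfl
  have hinj : Function.Injective ρ := by
    rw [← LinearMap.ker_eq_bot]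
    refine LinearMap.ker_eq_bot'.2 fun u hu => ?_
    refine hval0 u fun x hx => ?_
    have := congrFun hu (emb.symm ⟨x, hx⟩)
    rw [hρval] at this
    simp only [Equiv.apply_symm_apply] at this
    have h2 : (2:ℝ)⁻¹ ≠ 0 := by norm_num
    exact (mul_eq_zero.1 (by simpa using this)).resolve_left h2
  have hsurj : Function.Surjective ρ := by
    intro g
    set m : V → ℝ := fun q => if hq : q ∈ I then 2 * g (emb.symm ⟨q, hq⟩) else 0 with hm
    refine ⟨⟨P m, ⟨m, rfl⟩⟩, ?_⟩
    funext i
    rw [hρval]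
    show 2⁻¹ * P m ((emb i : V)) = g i
    rw [f1 m _ (emb i).2, hm]
    simp only [dif_pos (emb i).2]
    rw [Subtype.coe_eta, Equiv.symm_apply_apply]
    ring
  set T : Y ≃ₗ[ℝ] (Fin d → ℝ) := LinearEquiv.ofBijective ρ ⟨hinj, hsurj⟩ with hT
  have hTval : ∀ u : Y, T u = ρ u := fun _ => rfl
  have hfinrank : Module.finrank ℝ Y = d := by
    rw [T.finrank_eq, Module.finrank_fin_fun]
  -- l1 norm computation
  have hl1 : ∀ u : Y, l1norm (T u) = 2⁻¹ * ∑ x ∈ I, |(u : V → ℝ) x| := by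
    intro u
    rw [hTval]
    show ∑ i, |2⁻¹ * (u : V → ℝ) (emb i)| = _
    have : ∀ i : Fin d, |2⁻¹ * (u : V → ℝ) (emb i)| = 2⁻¹ * |(u : V → ℝ) (emb i)| := by
      intro i; rw [abs_mul]; norm_num
    rw [Finset.sum_congr rfl fun i _ => this i, ← Finset.mul_sum]
    congr 1
    rw [← Finset.sum_coe_sort I (fun x => |(u : V → ℝ) x|)]
    exact Equiv.sum_comp emb (fun x : ↥I => |(u : V → ℝ) (x : V)|)
  -- upper estimate for elements of Y
  have hupper : ∀ u : Y, freeNorm V (u : V → ℝ) ≤ D * ∑ x ∈ I, |(u : V → ℝ) x| := by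
    intro u
    have hrepr : (u : V → ℝ) = fun q => ∑ x ∈ I, (u : V → ℝ) x * mol x (π x) q := by
      conv_lhs => rw [← hPfix _ u.2]
      rfl
    calc freeNorm V (u : V → ℝ)
        = freeNorm V (fun q => ∑ x ∈ I, (u : V → ℝ) x * mol x (π x) q) := by rw [← hrepr]
      _ ≤ ∑ x ∈ I, |(u : V → ℝ) x| * dist x (π x) := freeNorm_comb_le I _ π
      _ ≤ ∑ x ∈ I, |(u : V → ℝ) x| * D := by
          refine Finset.sum_le_sum fun x hx => ?_
          exact mul_le_mul_of_nonneg_left (hπd x ((hmemI x).1 hx)) (abs_nonneg _)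
      _ = D * ∑ x ∈ I, |(u : V → ℝ) x| := by rw [← Finset.sum_mul]; ring
  refine ⟨Y, hYmol, hfinrank, ⟨T, ?_⟩, ⟨P, (fun m => ⟨m, rfl⟩), hPfix, ?_⟩, ?_⟩
  · -- norm bounds for T
    intro u
    have hmol : ∑ q, (u : V → ℝ) q = 0 := hYmol u.2
    constructor
    · rw [hl1]
      exact half_le_freeNorm hone (u : V → ℝ) hmol I
    · calc freeNorm V (u : V → ℝ) ≤ D * ∑ x ∈ I, |(u : V → ℝ) x| := hupper u
        _ = (2 * D) * l1norm (T u) := by rw [hl1]; ring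
        _ ≤ C * l1norm (T u) := mul_le_mul_of_nonneg_right hC (l1norm_nonneg _)
  · -- projection bound
    intro m hmmol
    have hmsum : ∑ q, m q = 0 := hmmol
    calc freeNorm V (P m) ≤ ∑ x ∈ I, |m x| * dist x (π x) := freeNorm_comb_le I m π
      _ ≤ ∑ x ∈ I, |m x| * D := by
          refine Finset.sum_le_sum fun x hx => ?_
          exact mul_le_mul_of_nonneg_left (hπd x ((hmemI x).1 hx)) (abs_nonneg _)
      _ = (2 * D) * (2⁻¹ * ∑ x ∈ I, |m x|) := by rw [← Finset.sum_mul]; ring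
      _ ≤ (2 * D) * freeNorm V m := by
          refine mul_le_mul_of_nonneg_left ?_ (by linarith)
          exact half_le_freeNorm hone m hmsum I
      _ ≤ C * freeNorm V m := by
          refine mul_le_mul_of_nonneg_right hC (freeNorm_nonneg m hmsum)
  · -- molecules ≤ Y when A is a singleton
    intro a0 hA
    intro m hmmol
    have hmsum : ∑ q, m q = 0 := hmmol
    have ha0I : a0 ∉ I := by
      rw [hmemI]; simp [hA]
    have key : P m = m := by
      funext q
      by_cases hq : q ∈ I
      · exact f1 m q hq
      · have hq' : q = a0 := by
          by_contra hne
          exact hq ((hmemI q).2 (by simp [hA, hne]))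
        rw [hPapply]
        have h1 : ∀ x ∈ I, m x * mol x (π x) q = -(m x) := by
          intro x hx
          have hπx : π x = a0 := by
            have := hπA x ((hmemI x).1 hx)
            simpa [hA] using this
          have hqx : a0 ≠ x := by
            intro h
            exact ((hmemI x).1 hx) (by rw [← h]; simp [hA])
          simp [mol, hπx, hq', hqx]
        rw [Finset.sum_congr rfl h1, Finset.sum_neg_distrib]
        have hsplit : ∑ x ∈ I, m x + m a0 = 0 := by
          have hsum2 : ∑ q, m q = ∑ x ∈ I, m x + ∑ x ∈ A, m x := by
            rw [hI, add_comm, Finset.sum_add_sum_compl]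
          rw [hsum2, hA, Finset.sum_singleton] at hmsum
          linarith
        rw [hq']
        linarith
    rw [← key]
    exact ⟨m, rfl⟩

end Construct

section Graph
variable {W : Type*} {G : SimpleGraph W}

lemma walk_mid (hconn : G.Connected) {u v : W} (w : G.Walk u v) :
    ∀ s : ℕ, s ≤ w.length → ∃ z, G.dist u z ≤ s ∧ G.dist z v ≤ w.length - s := by
  induction w with
  | nil =>
    intro s hs
    simp only [SimpleGraph.Walk.length_nil, Nat.le_zero] at hs
    subst hs
    rename_i x
    exact ⟨x, by simp [SimpleGraph.dist_self], by simp [SimpleGraph.dist_self]⟩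
  | @cons a b c hadj w ih =>
    intro s hs
    match s with
    | 0 =>
      refine ⟨a, by simp [SimpleGraph.dist_self], ?_⟩
      simpa using SimpleGraph.dist_le (SimpleGraph.Walk.cons hadj w)
    | s + 1 =>
      obtain ⟨z, h1, h2⟩ := ih s (by simpa [SimpleGraph.Walk.length_cons] using hs)
      refine ⟨z, ?_, ?_⟩
      · calc G.dist a z ≤ G.dist a b + G.dist b z := hconn.dist_triangle
          _ ≤ 1 + s := by
              have hab : G.dist a b = 1 := SimpleGraph.dist_eq_one_iff_adj.2 hadj
              omega
          _ = s + 1 := by omega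
      · simpa [SimpleGraph.Walk.length_cons] using h2
  
lemma dist_mid (hconn : G.Connected) (u v : W) (s : ℕ) (hs : s ≤ G.dist u v) :
    ∃ z, G.dist u z = s ∧ G.dist z v = G.dist u v - s := by
  obtain ⟨w, hw⟩ := hconn.exists_walk_length_eq_dist u v
  obtain ⟨z, h1, h2⟩ := walk_mid hconn w s (by omega)
  rw [hw] at h2
  have h3 := hconn.dist_triangle (u := u) (v := z) (w := v)
  exact ⟨z, by omega, by omega⟩

lemma dist_lt_card [Fintype W] (hconn : G.Connected) (u v : W) :
    G.dist u v < Fintype.card W := by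
  classical
  obtain ⟨w, hw⟩ := hconn.exists_walk_length_eq_dist u v
  calc G.dist u v ≤ w.bypass.length := SimpleGraph.dist_le w.bypass
    _ < Fintype.card W := w.bypass_isPath.length_lt

end Graph

/-- for a connected unweighted graph `M` on `n` vertices and
`p ≤ diam(M) + 1`, the free space contains a `4p`-complemented subspace of dimension
`d ≥ n(p-1)/p` which is `4p`-isomorphic to `ℓ₁^d`; moreover if `p > diam(M)` then
`d_BM(F(M), ℓ₁^{n-1}) ≤ 2p`. -/
theorem stmt6 {V : Type*} [Fintype V] [MetricSpace V] (G : SimpleGraph V)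
    (hconn : G.Connected) (hdist : ∀ x y : V, dist x y = (G.dist x y : ℝ))
    (n : ℕ) (hn : Fintype.card V = n)
    (diamG : ℕ) (hdiam : diamG = Finset.univ.sup (fun q : V × V => G.dist q.1 q.2))
    (p : ℕ) (hp0 : 0 < p) (hp : p ≤ diamG + 1) :
    (∃ (d : ℕ) (Y : Submodule ℝ (V → ℝ)), Y ≤ molecules V ∧
      (n : ℝ) * ((p : ℝ) - 1) / (p : ℝ) ≤ (d : ℝ) ∧ Module.finrank ℝ Y = d ∧
      (∃ T : Y ≃ₗ[ℝ] (Fin d → ℝ),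
        ∀ u : Y, l1norm (T u) ≤ freeNorm V u ∧ freeNorm V u ≤ (4 * p : ℝ) * l1norm (T u)) ∧
      (∃ P : (V → ℝ) →ₗ[ℝ] (V → ℝ),
        (∀ m ∈ molecules V, P m ∈ Y) ∧ (∀ u ∈ Y, P u = u) ∧
        ∀ m ∈ molecules V, freeNorm V (P m) ≤ (4 * p : ℝ) * freeNorm V m)) ∧
    (diamG < p → ∃ T : molecules V ≃ₗ[ℝ] (Fin (n - 1) → ℝ),
      ∀ m : molecules V,
        l1norm (T m) ≤ freeNorm V m ∧ freeNorm V m ≤ (2 * p : ℝ) * l1norm (T m)) := by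
  classical
  haveI hNE : Nonempty V := hconn.nonempty
  obtain ⟨O⟩ := hconn.nonempty
  have hone : ∀ x y : V, x ≠ y → (1:ℝ) ≤ dist x y := by
    intro x y hxy
    rw [hdist]
    have h := hconn.pos_dist_of_ne hxy
    exact_mod_cast h
  have hdle : ∀ x y : V, G.dist x y ≤ diamG := by
    intro x y
    rw [hdiam]
    exact Finset.le_sup (f := fun q : V × V => G.dist q.1 q.2) (Finset.mem_univ (x, y))
  have hn1 : 1 ≤ n := by rw [← hn]; exact Fintype.card_pos
  have hdiam_lt : diamG < n := by
    rw [hdiam, ← hn]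
    exact (Finset.sup_lt_iff (by simpa using (Fintype.card_pos (α := V)))).2
      fun q _ => dist_lt_card hconn q.1 q.2
  have hpn : p ≤ n := by omega
  have hp' : (0:ℝ) < p := by exact_mod_cast hp0
  obtain ⟨j, hjmem, hjmin⟩ := Finset.exists_min_image (Finset.range p)
    (fun k => (Finset.univ.filter (fun x : V => G.dist O x % p = k)).card)
    ⟨0, Finset.mem_range.2 hp0⟩
  have hjp : j < p := Finset.mem_range.1 hjmem
  set S : Finset V := Finset.univ.filter (fun x : V => G.dist O x % p = j) with hS
  have hsum : ∑ k ∈ Finset.range p,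
      (Finset.univ.filter (fun x : V => G.dist O x % p = k)).card = n := by
    rw [← (Finset.card_eq_sum_card_fiberwise (s := (Finset.univ : Finset V))
      (t := Finset.range p) (f := fun x : V => G.dist O x % p)
      (fun x _ => Finset.mem_range.2 (Nat.mod_lt _ hp0)))]
    rw [Finset.card_univ, hn]
  have hpS : p * S.card ≤ n := by
    calc p * S.card = ∑ _k ∈ Finset.range p, S.card := by
          rw [Finset.sum_const, Finset.card_range, smul_eq_mul]
      _ ≤ ∑ k ∈ Finset.range p,
            (Finset.univ.filter (fun x : V => G.dist O x % p = k)).card :=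
          Finset.sum_le_sum fun k hk => hjmin k hk
      _ = n := hsum
  constructor
  · -- first part
    by_cases hSne : S.Nonempty
    · -- S nonempty : use A = S
      have hex : ∀ x : V, x ∉ S → ∃ z, z ∈ S ∧ G.dist x z ≤ 2 * p := by
        intro x hx
        obtain ⟨a, ha⟩ := hSne
        have haj : G.dist O a % p = j := by
          rw [hS] at ha; simpa using ha
        rcases le_or_gt j (G.dist O x) with hjt | htj
        · set t := G.dist O x with ht
          have hmod := Nat.mod_lt (t - j) hp0
          set s := t - (t - j) % p with hsdef
          have hsle : s ≤ t := Nat.sub_le _ _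
          have hsj : s % p = j := by
            have hdm := Nat.div_add_mod (t - j) p
            have hseq : s = j + p * ((t - j) / p) := by omega
            rw [hseq, Nat.add_mul_mod_self_left, Nat.mod_eq_of_lt hjp]
          obtain ⟨z, hz1, hz2⟩ := dist_mid hconn O x s hsle
          refine ⟨z, ?_, ?_⟩
          · rw [hS, Finset.mem_filter]
            exact ⟨Finset.mem_univ z, by rw [hz1, hsj]⟩
          · rw [SimpleGraph.dist_comm]; omega
        · have hja : j ≤ G.dist O a := by
            have := Nat.mod_le (G.dist O a) p
            omega
          obtain ⟨z, hz1, _⟩ := dist_mid hconn O a j hja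
          refine ⟨z, ?_, ?_⟩
          · rw [hS, Finset.mem_filter]
            exact ⟨Finset.mem_univ z, by rw [hz1, Nat.mod_eq_of_lt hjp]⟩
          · calc G.dist x z ≤ G.dist x O + G.dist O z := hconn.dist_triangle
              _ ≤ 2 * p := by
                  rw [hz1, SimpleGraph.dist_comm]
                  omega
      have hex' : ∀ x : V, ∃ z, x ∉ S → (z ∈ S ∧ G.dist x z ≤ 2 * p) := by
        intro x
        by_cases hx : x ∈ S
        · exact ⟨x, fun h => absurd hx h⟩
        · obtain ⟨z, hz⟩ := hex x hx
          exact ⟨z, fun _ => hz⟩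
      choose π hπ using hex'
      have hπA : ∀ x, x ∉ S → π x ∈ S := fun x hx => (hπ x hx).1
      have hπd : ∀ x, x ∉ S → dist x (π x) ≤ (2 * (p:ℝ)) := by
        intro x hx
        rw [hdist]
        have h := (hπ x hx).2
        push_cast
        exact_mod_cast h
      obtain ⟨Y, hY1, hY2, hY3, hY4, -⟩ := construct hone S π hπA (2 * (p:ℝ)) (4 * (p:ℝ))
        (by positivity) (by nlinarith) hπd (Sᶜ : Finset V).card rfl
      refine ⟨(Sᶜ : Finset V).card, Y, hY1, ?_, hY2, hY3, ?_⟩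
      · have hScard_le : S.card ≤ n := by
          rw [← hn]; exact Finset.card_le_univ S
        have hcompl : ((Sᶜ : Finset V).card : ℝ) = (n:ℝ) - S.card := by
          rw [Finset.card_compl, hn, Nat.cast_sub hScard_le]
        have h2 : (p:ℝ) * S.card ≤ n := by exact_mod_cast hpS
        rw [div_le_iff₀ hp', hcompl]
        nlinarith
      · obtain ⟨P, hP1, hP2, hP3⟩ := hY4
        exact ⟨P, fun m _ => hP1 m, hP2, hP3⟩
    · -- S empty : use A = {O}
      have hlt : ∀ x : V, G.dist O x < j := by
        intro x
        by_contra hge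
        push_neg at hge
        obtain ⟨z, hz1, _⟩ := dist_mid hconn O x j hge
        refine hSne ⟨z, ?_⟩
        rw [hS, Finset.mem_filter]
        exact ⟨Finset.mem_univ z, by rw [hz1, Nat.mod_eq_of_lt hjp]⟩
      have hπd : ∀ x, x ∉ ({O} : Finset V) → dist x ((fun _ => O) x) ≤ (2 * (p:ℝ)) := by
        intro x _
        rw [hdist]
        have h : G.dist x O < j := by rw [SimpleGraph.dist_comm]; exact hlt x
        have h2 : G.dist x O ≤ 2 * p := by omega
        calc (G.dist x O : ℝ) ≤ ((2 * p : ℕ) : ℝ) := Nat.cast_le.2 h2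
          _ = 2 * (p:ℝ) := by push_cast; ring
      obtain ⟨Y, hY1, hY2, hY3, hY4, -⟩ := construct hone ({O} : Finset V) (fun _ => O)
        (fun x _ => Finset.mem_singleton_self O) (2 * (p:ℝ)) (4 * (p:ℝ))
        (by positivity) (by nlinarith) hπd (({O} : Finset V)ᶜ).card rfl
      refine ⟨(({O} : Finset V)ᶜ).card, Y, hY1, ?_, hY2, hY3, ?_⟩
      · have hcompl : ((({O} : Finset V)ᶜ).card : ℝ) = (n:ℝ) - 1 := by
          rw [Finset.card_compl, hn, Finset.card_singleton, Nat.cast_sub hn1]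
          norm_num
        have h2 : (p:ℝ) ≤ n := by exact_mod_cast hpn
        rw [div_le_iff₀ hp', hcompl]
        nlinarith
      · obtain ⟨P, hP1, hP2, hP3⟩ := hY4
        exact ⟨P, fun m _ => hP1 m, hP2, hP3⟩
  · -- second part
    intro hdp
    have hπd : ∀ x, x ∉ ({O} : Finset V) → dist x ((fun _ => O) x) ≤ ((p:ℝ)) := by
      intro x _
      rw [hdist]
      have h := hdle x O
      have : G.dist x O ≤ p := by omega
      exact_mod_cast this
    have hd : ((({O} : Finset V)ᶜ).card) = n - 1 := by
      rw [Finset.card_compl, hn, Finset.card_singleton]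
    obtain ⟨Y, hY1, -, ⟨T, hT⟩, -, hsing⟩ := construct hone ({O} : Finset V) (fun _ => O)
      (fun x _ => Finset.mem_singleton_self O) ((p:ℝ)) (2 * (p:ℝ))
      (by positivity) (by linarith) hπd (n - 1) hd
    have hYeq : molecules V = Y := le_antisymm (hsing O rfl) hY1
    refine ⟨(LinearEquiv.ofEq _ _ hYeq).trans T, ?_⟩
    intro m
    have h := hT ((LinearEquiv.ofEq _ _ hYeq) m)
    have hco : ((LinearEquiv.ofEq _ _ hYeq) m : V → ℝ) = (m : V → ℝ) := rfl
    rw [hco] at h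
    simpa [LinearEquiv.trans_apply] using h
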